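/- arXiv:2004.03444 — 2 statements merged into one kernel-verified Lean document; each statement's English description precedes it below -/
import Mathlib

section
/- The function s(p) = p·(ζ(a) + 1 − ζ(a·p) − p)/(1 + a·ζ'(a)) is strictly concave on the interval [0,1]: its second derivative s''(p) = (−2 − 2a·ζ'(a·p) − a²·p·ζ''(a·p))/(1 + a·ζ'(a)) is strictly negative for all p ∈ [0,1]. -/
/-!
Write `ζ = exp ∘ F` with `F x = x * ∑ c k * x ^ k` and `c k = tr (T ^ (k + 1)) / (k + 1) ≥ 0`,
the traces being nonnegative because `T` is. A power series with nonnegative coefficients may be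
differentiated termwise on `(-R, R)`, and it and its first two derivatives are nonnegative on
`[0, R)`; this property survives `f ↦ x * f` and `f ↦ exp ∘ f`, so `ζ, ζ', ζ'' ≥ 0` on `[0, R)`.
Hence `1 + a ζ'(a) > 0`, and in the numerator `-2 - 2a ζ'(ap) - a²p ζ''(ap)` of `s''` every term
but `-2` is nonpositive for `p ∈ [0, 1]`.
-/

open Set Filter Topology

section PowerSeries

variable {c : ℕ → ℝ} {R : ℝ}

def derivCoeff (c : ℕ → ℝ) (k : ℕ) : ℝ := (k + 1) * c (k + 1)

lemma derivCoeff_nonneg (hc : ∀ k, 0 ≤ c k) (k : ℕ) : 0 ≤ derivCoeff c k :=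
  mul_nonneg (by positivity) (hc _)

lemma summable_abs_derivCoeff_mul_pow (hc : ∀ r ∈ Ioo 0 R, Summable fun k => |c k| * r ^ k) :
    ∀ r ∈ Ioo 0 R, Summable fun k => |derivCoeff c k| * r ^ k := by
  intro r hr
  obtain ⟨r', hrr', hr'R⟩ := exists_between hr.2
  have hr' : 0 < r' := hr.1.trans hrr'
  -- compare with `r' ∈ (r, R)`: the terms at `r'` are bounded and `∑ (k + 1) (r / r') ^ k` converges
  obtain ⟨M, hM⟩ : ∃ M, ∀ k, |c k| * r' ^ k ≤ M :=
    ⟨_, fun k => (hc r' ⟨hr', hr'R⟩).le_tsum k fun j _ => by positivity⟩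
  have hq₀ : 0 ≤ r / r' := div_nonneg hr.1.le hr'.le
  have hq : ‖r / r'‖ < 1 := by rw [Real.norm_of_nonneg hq₀]; exact (div_lt_one hr').2 hrr'
  have hgeom : Summable fun k : ℕ => ((k : ℝ) + 1) * (r / r') ^ k := by
    simpa [add_mul] using
      (summable_pow_mul_geometric_of_norm_lt_one 1 hq).add (summable_geometric_of_norm_lt_one hq)
  refine .of_nonneg_of_le (fun k => mul_nonneg (abs_nonneg _) (pow_nonneg hr.1.le k)) (fun k => ?_)
    (hgeom.mul_left (M / r'))
  have hk : 0 ≤ ((k : ℝ) + 1) * (r / r') ^ k := mul_nonneg (by positivity) (pow_nonneg hq₀ k)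
  calc |derivCoeff c k| * r ^ k
      = ((k + 1) * (r / r') ^ k) * (|c (k + 1)| * r' ^ (k + 1)) / r' := by
        rw [derivCoeff, abs_mul, abs_of_nonneg (by positivity : (0 : ℝ) ≤ k + 1), div_pow]
        field_simp
        ring
    _ ≤ ((k + 1) * (r / r') ^ k) * M / r' :=
        div_le_div_of_nonneg_right (mul_le_mul_of_nonneg_left (hM _) hk) hr'.le
    _ = M / r' * ((k + 1) * (r / r') ^ k) := by ring

lemma hasDerivAt_tsum_mul_pow (hc : ∀ r ∈ Ioo 0 R, Summable fun k => |c k| * r ^ k)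
    {x : ℝ} (hx : |x| < R) :
    HasDerivAt (fun y => ∑' k, c k * y ^ k) (∑' k, derivCoeff c k * x ^ k) x := by
  obtain ⟨b, hxb, hbR⟩ := exists_between hx
  have hb : 0 < b := (abs_nonneg x).trans_lt hxb
  have hx' : x ∈ Ioo (-b) b := abs_lt.1 hxb
  have hu : Summable fun n : ℕ => n * |c n| * b ^ (n - 1) := by
    rw [← summable_nat_add_iff 1]
    refine (summable_abs_derivCoeff_mul_pow hc b ⟨hb, hbR⟩).congr fun k => ?_
    rw [derivCoeff, abs_mul, abs_of_nonneg (by positivity : (0 : ℝ) ≤ k + 1)]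
    push_cast
    simp
  have hbound : ∀ n (y : ℝ), y ∈ Ioo (-b) b →
      ‖c n * (n * y ^ (n - 1))‖ ≤ n * |c n| * b ^ (n - 1) := by
    intro n y hy
    rw [Real.norm_eq_abs, abs_mul, abs_mul, abs_pow, Nat.abs_cast, mul_left_comm, ← mul_assoc]
    gcongr
    exact (abs_lt.2 hy).le
  have hderiv := hasDerivAt_tsum_of_isPreconnected hu isOpen_Ioo isPreconnected_Ioo
    (fun n y _ => (hasDerivAt_pow n y).const_mul (c n)) hbound ⟨neg_lt_zero.2 hb, hb⟩
    (summable_of_ne_finset_zero (s := {0}) fun k hk => by simp [show k ≠ 0 by simpa using hk]) hx'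
  suffices ∑' k, derivCoeff c k * x ^ k = ∑' n : ℕ, c n * (n * x ^ (n - 1)) by rwa [this]
  rw [(Summable.of_norm_bounded hu fun n => hbound n x hx').tsum_eq_zero_add]
  simp only [derivCoeff, CharP.cast_eq_zero, zero_mul, mul_zero, zero_add, Nat.cast_add,
    Nat.cast_one, add_tsub_cancel_right]
  exact tsum_congr fun k => by ring

end PowerSeries

structure HasNonnegDerivs (R : ℝ) (f f₁ f₂ : ℝ → ℝ) : Prop where
  hasDerivAt : ∀ x ∈ Ioo (-R) R, HasDerivAt f (f₁ x) x
  hasDerivAt₁ : ∀ x ∈ Ioo (-R) R, HasDerivAt f₁ (f₂ x) x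
  nonneg : ∀ x ∈ Ico 0 R, 0 ≤ f x
  nonneg₁ : ∀ x ∈ Ico 0 R, 0 ≤ f₁ x
  nonneg₂ : ∀ x ∈ Ico 0 R, 0 ≤ f₂ x

namespace HasNonnegDerivs

variable {R x : ℝ} {f f₁ f₂ : ℝ → ℝ}

lemma deriv_eq (h : HasNonnegDerivs R f f₁ f₂) (hx : x ∈ Ioo (-R) R) : deriv f x = f₁ x :=
  (h.hasDerivAt x hx).deriv

lemma deriv_eventuallyEq (h : HasNonnegDerivs R f f₁ f₂) (hx : x ∈ Ioo (-R) R) :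
    deriv f =ᶠ[𝓝 x] f₁ :=
  eventually_of_mem (isOpen_Ioo.mem_nhds hx) fun _ hy => h.deriv_eq hy

lemma deriv_deriv_eq (h : HasNonnegDerivs R f f₁ f₂) (hx : x ∈ Ioo (-R) R) :
    deriv (deriv f) x = f₂ x := by
  rw [(h.deriv_eventuallyEq hx).deriv_eq]
  exact (h.hasDerivAt₁ x hx).deriv

lemma eventually_differentiableAt (h : HasNonnegDerivs R f f₁ f₂) (hx : x ∈ Ioo (-R) R) :
    ∀ᶠ y in 𝓝 x, DifferentiableAt ℝ f y :=
  eventually_of_mem (isOpen_Ioo.mem_nhds hx) fun y hy => (h.hasDerivAt y hy).differentiableAt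

lemma differentiableAt_deriv (h : HasNonnegDerivs R f f₁ f₂) (hx : x ∈ Ioo (-R) R) :
    DifferentiableAt ℝ (deriv f) x :=
  ((h.hasDerivAt₁ x hx).congr_of_eventuallyEq (h.deriv_eventuallyEq hx)).differentiableAt

lemma tsum_mul_pow {c : ℕ → ℝ} (hc : ∀ k, 0 ≤ c k)
    (hsum : ∀ r ∈ Ioo 0 R, Summable fun k => c k * r ^ k) :
    HasNonnegDerivs R (fun x => ∑' k, c k * x ^ k) (fun x => ∑' k, derivCoeff c k * x ^ k)
      (fun x => ∑' k, derivCoeff (derivCoeff c) k * x ^ k) := by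
  have habs : ∀ r ∈ Ioo 0 R, Summable fun k => |c k| * r ^ k := by
    simpa only [abs_of_nonneg (hc _)] using hsum
  have hc₁ := derivCoeff_nonneg hc
  have hc₂ := derivCoeff_nonneg hc₁
  refine ⟨fun x hx => hasDerivAt_tsum_mul_pow habs (abs_lt.2 hx),
    fun x hx => hasDerivAt_tsum_mul_pow (summable_abs_derivCoeff_mul_pow habs) (abs_lt.2 hx),
    fun x hx => tsum_nonneg fun k => mul_nonneg (hc k) (pow_nonneg hx.1 k),
    fun x hx => tsum_nonneg fun k => mul_nonneg (hc₁ k) (pow_nonneg hx.1 k),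
    fun x hx => tsum_nonneg fun k => mul_nonneg (hc₂ k) (pow_nonneg hx.1 k)⟩

lemma id_mul (h : HasNonnegDerivs R f f₁ f₂) :
    HasNonnegDerivs R (fun x => x * f x) (fun x => f x + x * f₁ x)
      (fun x => 2 * f₁ x + x * f₂ x) where
  hasDerivAt x hx := ((hasDerivAt_id' x).fun_mul (h.hasDerivAt x hx)).congr_deriv (by ring)
  hasDerivAt₁ x hx :=
    ((h.hasDerivAt x hx).fun_add ((hasDerivAt_id' x).fun_mul (h.hasDerivAt₁ x hx))).congr_deriv
      (by ring)
  nonneg x hx := mul_nonneg hx.1 (h.nonneg x hx)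
  nonneg₁ x hx := add_nonneg (h.nonneg x hx) (mul_nonneg hx.1 (h.nonneg₁ x hx))
  nonneg₂ x hx :=
    add_nonneg (mul_nonneg zero_le_two (h.nonneg₁ x hx)) (mul_nonneg hx.1 (h.nonneg₂ x hx))

lemma exp (h : HasNonnegDerivs R f f₁ f₂) :
    HasNonnegDerivs R (fun x => Real.exp (f x)) (fun x => Real.exp (f x) * f₁ x)
      (fun x => Real.exp (f x) * (f₁ x ^ 2 + f₂ x)) where
  hasDerivAt x hx := (h.hasDerivAt x hx).exp
  hasDerivAt₁ x hx :=
    ((h.hasDerivAt x hx).exp.fun_mul (h.hasDerivAt₁ x hx)).congr_deriv (by ring)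
  nonneg x _ := (Real.exp_pos _).le
  nonneg₁ x hx := mul_nonneg (Real.exp_pos _).le (h.nonneg₁ x hx)
  nonneg₂ x hx := by have := h.nonneg₂ x hx; positivity

end HasNonnegDerivs

lemma hasDerivAt_mul_sub_comp_mul {f : ℝ → ℝ} {f' a q : ℝ} (b D : ℝ)
    (hf : HasDerivAt f f' (a * q)) :
    HasDerivAt (fun q => q * (b - f (a * q) - q) / D)
      ((b - f (a * q) - 2 * q - a * q * f') / D) q := by
  have hlin : HasDerivAt (fun q => a * q) a q := by simpa using (hasDerivAt_id' q).const_mul a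
  have hcomp : HasDerivAt (fun q => f (a * q)) (f' * a) q := hf.comp q hlin
  exact ((hasDerivAt_id' q).fun_mul (((hasDerivAt_const q b).fun_sub hcomp).fun_sub
    (hasDerivAt_id' q))).div_const D |>.congr_deriv (by ring)

lemma deriv_deriv_mul_sub_comp_mul {f : ℝ → ℝ} {a p : ℝ} (b D : ℝ)
    (hf : ∀ᶠ y in 𝓝 (a * p), DifferentiableAt ℝ f y)
    (hf' : DifferentiableAt ℝ (deriv f) (a * p)) :
    deriv (deriv fun q => q * (b - f (a * q) - q) / D) p =
      (-2 - 2 * a * deriv f (a * p) - a ^ 2 * p * deriv (deriv f) (a * p)) / D := by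
  have hev : ∀ᶠ q in 𝓝 p, DifferentiableAt ℝ f (a * q) :=
    ((continuous_const_mul a).tendsto p).eventually hf
  have hderiv : deriv (fun q => q * (b - f (a * q) - q) / D) =ᶠ[𝓝 p]
      fun q => (b - f (a * q) - 2 * q - a * q * deriv f (a * q)) / D :=
    hev.mono fun q hq => (hasDerivAt_mul_sub_comp_mul b D hq.hasDerivAt).deriv
  rw [hderiv.deriv_eq]
  have hlin : HasDerivAt (fun q => a * q) a p := by simpa using (hasDerivAt_id' p).const_mul a
  have hf₀ : HasDerivAt (fun q => f (a * q)) (deriv f (a * p) * a) p :=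
    hev.self_of_nhds.hasDerivAt.comp p hlin
  have hf₁ : HasDerivAt (fun q => deriv f (a * q)) (deriv (deriv f) (a * p) * a) p :=
    hf'.hasDerivAt.comp p hlin
  refine HasDerivAt.deriv ?_
  exact ((((hasDerivAt_const p b).fun_sub hf₀).fun_sub ((hasDerivAt_id' p).const_mul 2)).fun_sub
    (hlin.fun_mul hf₁)).div_const D |>.congr_deriv (by ring)

lemma mul_mem_Ico_of_mem_Icc {a R p : ℝ} (ha : a ∈ Ioo 0 R) (hp : p ∈ Icc 0 1) :
    a * p ∈ Ico 0 R :=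
  ⟨mul_nonneg ha.1.le hp.1, (mul_le_of_le_one_right ha.1.le hp.2).trans_lt ha.2⟩

namespace HasNonnegDerivs

variable {R a : ℝ} {f f₁ f₂ s : ℝ → ℝ}

theorem deriv_deriv_eq_and_neg (hf : HasNonnegDerivs R f f₁ f₂) (ha : a ∈ Ioo 0 R)
    (hs : ∀ p, s p = p * (f a + 1 - f (a * p) - p) / (1 + a * deriv f a)) :
    ∀ p ∈ Icc (0 : ℝ) 1,
      deriv (deriv s) p =
          (-2 - 2 * a * deriv f (a * p) - a ^ 2 * p * deriv (deriv f) (a * p)) /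
            (1 + a * deriv f a) ∧
        deriv (deriv s) p < 0 := by
  obtain rfl : s = _ := funext hs
  have hIoo : Ico 0 R ⊆ Ioo (-R) R := Ico_subset_Ioo_left (neg_lt_zero.2 (ha.1.trans ha.2))
  have hD : 0 < 1 + a * deriv f a := by
    rw [hf.deriv_eq (hIoo ⟨ha.1.le, ha.2⟩)]
    linarith [mul_nonneg ha.1.le (hf.nonneg₁ a ⟨ha.1.le, ha.2⟩)]
  intro p hp
  have hx := hIoo (mul_mem_Ico_of_mem_Icc ha hp)
  rw [deriv_deriv_mul_sub_comp_mul _ _ (hf.eventually_differentiableAt hx)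
    (hf.differentiableAt_deriv hx)]
  refine ⟨rfl, div_neg_of_neg_of_pos ?_ hD⟩
  rw [hf.deriv_eq hx, hf.deriv_deriv_eq hx]
  linarith [mul_nonneg ha.1.le (hf.nonneg₁ _ (mul_mem_Ico_of_mem_Icc ha hp)),
    mul_nonneg (mul_nonneg (sq_nonneg a) hp.1) (hf.nonneg₂ _ (mul_mem_Ico_of_mem_Icc ha hp))]

theorem strictConcaveOn_Icc (hf : HasNonnegDerivs R f f₁ f₂) (ha : a ∈ Ioo 0 R)
    (hs : ∀ p, s p = p * (f a + 1 - f (a * p) - p) / (1 + a * deriv f a)) :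
    StrictConcaveOn ℝ (Icc 0 1) s := by
  refine strictConcaveOn_of_deriv2_neg' (convex_Icc 0 1) (fun p hp => ?_)
    fun p hp => (hf.deriv_deriv_eq_and_neg ha hs p hp).2
  obtain rfl : s = _ := funext hs
  have hx := Ico_subset_Ioo_left (neg_lt_zero.2 (ha.1.trans ha.2)) (mul_mem_Ico_of_mem_Icc ha hp)
  exact (hasDerivAt_mul_sub_comp_mul _ _ (hf.hasDerivAt _ hx)).continuousAt.continuousWithinAt

theorem exists_exp_tsum_mul_pow_succ {c : ℕ → ℝ} (hc : ∀ k, 0 ≤ c k)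
    (hsum : ∀ r ∈ Ioo 0 R, Summable fun k => c k * r ^ (k + 1)) :
    ∃ f₁ f₂, HasNonnegDerivs R (fun x => Real.exp (∑' k, c k * x ^ (k + 1))) f₁ f₂ := by
  have hsum' : ∀ r ∈ Ioo 0 R, Summable fun k => c k * r ^ k := fun r hr =>
    ((hsum r hr).div_const r).congr fun k => by rw [pow_succ]; field_simp [hr.1.ne']
  have hmul : (fun x => Real.exp (∑' k, c k * x ^ (k + 1))) =
      fun x => Real.exp (x * ∑' k, c k * x ^ k) := by
    ext x
    rw [← tsum_mul_left]
    exact congrArg Real.exp (tsum_congr fun k => by ring)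
  rw [hmul]
  exact ⟨_, _, ((tsum_mul_pow hc hsum').id_mul).exp⟩

end HasNonnegDerivs

lemma Matrix.trace_pow_nonneg {ι α : Type*} [Fintype ι] [DecidableEq ι] [Semiring α]
    [PartialOrder α] [IsOrderedRing α] {A : Matrix ι ι α} (hA : ∀ i j, 0 ≤ A i j) (k : ℕ) :
    0 ≤ (A ^ k).trace :=
  Finset.sum_nonneg fun i _ => Matrix.pow_apply_nonneg hA k i i

theorem ihara_s_strictConcave_general
    (n : ℕ) (T : Matrix (Fin n) (Fin n) ℝ)
    (hT : ∀ i j, 0 ≤ T i j)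
    (R : ℝ)
    (hsum : ∀ x ∈ Set.Ico (0 : ℝ) R,
      Summable (fun k : ℕ => (T ^ (k + 1)).trace / (k + 1) * x ^ (k + 1)))
    (ζ : ℝ → ℝ)
    (hζ : ∀ x : ℝ, ζ x = Real.exp (∑' k : ℕ, (T ^ (k + 1)).trace / (k + 1) * x ^ (k + 1)))
    (a : ℝ) (ha : a ∈ Set.Ioo (0 : ℝ) R)
    (s : ℝ → ℝ)
    (hs : ∀ p : ℝ, s p = p * (ζ a + 1 - ζ (a * p) - p) / (1 + a * deriv ζ a)) :
    (∀ p ∈ Set.Icc (0 : ℝ) 1,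
        deriv (deriv s) p =
            (-2 - 2 * a * deriv ζ (a * p) - a ^ 2 * p * deriv (deriv ζ) (a * p)) /
              (1 + a * deriv ζ a) ∧
          deriv (deriv s) p < 0) ∧
      StrictConcaveOn ℝ (Set.Icc (0 : ℝ) 1) s := by
  obtain ⟨ζ₁, ζ₂, hζd⟩ := HasNonnegDerivs.exists_exp_tsum_mul_pow_succ
    (fun k => div_nonneg (T.trace_pow_nonneg hT (k + 1)) (by positivity))
    fun r hr => hsum r (Ioo_subset_Ico_self hr)
  obtain rfl : ζ = _ := funext hζ
  exact ⟨hζd.deriv_deriv_eq_and_neg ha hs, hζd.strictConcaveOn_Icc ha hs⟩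

/-- The function s(p) = p·(ζ(a) + 1 − ζ(a·p) − p)/(1 + a·ζ'(a)) is strictly
concave on [0,1]: its second derivative
s''(p) = (−2 − 2a·ζ'(a·p) − a²·p·ζ''(a·p))/(1 + a·ζ'(a)) is strictly negative on [0,1]. -/
theorem ihara_s_strictConcave
    (n : ℕ) (hn : 0 < n) (T : Matrix (Fin n) (Fin n) ℝ)
    (hT : ∀ i j, 0 ≤ T i j) (htr : T.trace = 0)
    (R : ℝ) (hR : 0 < R)
    (hsum : ∀ x ∈ Set.Ico (0 : ℝ) R,
      Summable (fun k : ℕ => (T ^ (k + 1)).trace / (k + 1) * x ^ (k + 1)))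
    (ζ : ℝ → ℝ)
    (hζ : ∀ x : ℝ, ζ x = Real.exp (∑' k : ℕ, (T ^ (k + 1)).trace / (k + 1) * x ^ (k + 1)))
    (a : ℝ) (ha : a ∈ Set.Ioo (0 : ℝ) R)
    (s : ℝ → ℝ)
    (hs : ∀ p : ℝ, s p = p * (ζ a + 1 - ζ (a * p) - p) / (1 + a * deriv ζ a)) :
    (∀ p ∈ Set.Icc (0 : ℝ) 1,
        deriv (deriv s) p =
            (-2 - 2 * a * deriv ζ (a * p) - a ^ 2 * p * deriv (deriv ζ) (a * p)) /
              (1 + a * deriv ζ a) ∧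
          deriv (deriv s) p < 0) ∧
      StrictConcaveOn ℝ (Set.Icc (0 : ℝ) 1) s :=
  ihara_s_strictConcave_general n T hT R hsum ζ hζ a ha s hs
end

section
/- (Theorem 1 of the paper.) There exists a point c ∈ (0,1) which is the unique global maximum of s on (0,1): s'(c) = 0, and for every p ∈ [0,1] with p ≠ c one has s(p) < s(c). -/
/-!
The coefficients `tr(T^k)/k` are nonnegative, so `ζ = exp ∘ F` with `F` a power series with
nonnegative coefficients, and `ζ` is nonnegative, monotone and convex on `[0, R)`. Hence
`p ↦ p ζ(a p)` is convex on `[0, 1]` (a product of nonnegative monotone convex functions), and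
`s p = (p (ζ a + 1) - p² - p ζ(a p)) / (1 + a ζ'(a))` is strictly concave there, the denominator
being positive because `ζ' ≥ 0`. As `s 0 = s 1 = 0 < s (1/2)`, the maximum of `s` on `[0, 1]` is
attained at a single interior point, where `s'` vanishes.
-/

open Set Real

section PowerSeries

variable {u : ℕ → ℝ} {S : Set ℝ}

lemma summable_mul_pow_succ_of_le (hu : ∀ k, 0 ≤ u k) {x y : ℝ} (hx : 0 ≤ x) (hxy : x ≤ y)
    (hy : Summable fun k => u k * y ^ (k + 1)) : Summable fun k => u k * x ^ (k + 1) :=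
  hy.of_nonneg_of_le (fun k => mul_nonneg (hu k) (pow_nonneg hx _))
    (fun k => mul_le_mul_of_nonneg_left (pow_le_pow_left₀ hx hxy _) (hu k))

lemma monotoneOn_tsum_mul_pow_succ (hu : ∀ k, 0 ≤ u k) (hS₀ : S ⊆ Ici 0)
    (hS : ∀ x ∈ S, Summable fun k => u k * x ^ (k + 1)) :
    MonotoneOn (fun x => ∑' k, u k * x ^ (k + 1)) S := by
  intro x hx y hy hxy
  have hx₀ : 0 ≤ x := hS₀ hx
  exact (summable_mul_pow_succ_of_le hu hx₀ hxy (hS y hy)).tsum_le_tsum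
    (fun k => mul_le_mul_of_nonneg_left (pow_le_pow_left₀ hx₀ hxy _) (hu k)) (hS y hy)

lemma convexOn_tsum_mul_pow_succ (hu : ∀ k, 0 ≤ u k) (hconv : Convex ℝ S) (hS₀ : S ⊆ Ici 0)
    (hS : ∀ x ∈ S, Summable fun k => u k * x ^ (k + 1)) :
    ConvexOn ℝ S (fun x => ∑' k, u k * x ^ (k + 1)) := by
  refine ⟨hconv, fun x hx y hy t t' ht ht' htt => ?_⟩
  simp only [smul_eq_mul]
  have hterm : ∀ k, u k * (t * x + t' * y) ^ (k + 1)
      ≤ t * (u k * x ^ (k + 1)) + t' * (u k * y ^ (k + 1)) := fun k => by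
    have hpow := (convexOn_pow (k + 1)).2 (hS₀ hx) (hS₀ hy) ht ht' htt
    simp only [smul_eq_mul] at hpow
    nlinarith [mul_le_mul_of_nonneg_left hpow (hu k)]
  rw [← tsum_mul_left, ← tsum_mul_left, ← ((hS x hx).mul_left t).tsum_add ((hS y hy).mul_left t')]
  exact (hS _ (hconv hx hy ht ht' htt)).tsum_le_tsum hterm
    (((hS x hx).mul_left t).add ((hS y hy).mul_left t'))

lemma continuousOn_tsum_mul_pow_succ (hu : ∀ k, 0 ≤ u k) {y : ℝ}
    (hy : Summable fun k => u k * y ^ (k + 1)) :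
    ContinuousOn (fun x => ∑' k, u k * x ^ (k + 1)) (Icc 0 y) := by
  refine continuousOn_tsum (fun k => by fun_prop) hy fun k x hx => ?_
  rw [norm_mul, norm_pow, norm_of_nonneg (hu k), norm_of_nonneg hx.1]
  exact mul_le_mul_of_nonneg_left (pow_le_pow_left₀ hx.1 hx.2 _) (hu k)

end PowerSeries

lemma ConvexOn.exp {S : Set ℝ} {f : ℝ → ℝ} (hf : ConvexOn ℝ S f) :
    ConvexOn ℝ S (fun x => Real.exp (f x)) :=
  ⟨hf.1, fun _ hx _ hy _ _ ht ht' htt =>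
    (exp_le_exp.2 (hf.2 hx hy ht ht' htt)).trans
      (convexOn_exp.2 (mem_univ _) (mem_univ _) ht ht' htt)⟩

lemma StrictConcaveOn.div_const {S : Set ℝ} {f : ℝ → ℝ} (hf : StrictConcaveOn ℝ S f) {D : ℝ}
    (hD : 0 < D) : StrictConcaveOn ℝ S (fun x => f x / D) :=
  ⟨hf.1, fun x hx y hy hxy t t' ht ht' htt => by
    have h := hf.2 hx hy hxy ht ht' htt
    simp only [smul_eq_mul] at h ⊢
    rw [← mul_div_assoc, ← mul_div_assoc, ← add_div]
    exact div_lt_div_of_pos_right h hD⟩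

lemma strictConcaveOn_mul_sub_sub {S : Set ℝ} (hS₀ : S ⊆ Ici 0) {φ : ℝ → ℝ}
    (hφ : ConvexOn ℝ S φ) (hφ_mono : MonotoneOn φ S) (hφ₀ : ∀ x ∈ S, 0 ≤ φ x) (K : ℝ) :
    StrictConcaveOn ℝ S (fun p => p * (K - φ p - p)) := by
  have hquad : StrictConcaveOn ℝ S (fun p => K * p - p ^ 2) := by
    refine ⟨hφ.1, fun x _ y _ hxy t t' ht ht' htt => ?_⟩
    simp only [smul_eq_mul]
    have hxy' : 0 < (x - y) ^ 2 := by positivity [sub_ne_zero.2 hxy]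
    nlinarith [mul_pos (mul_pos ht ht') hxy']
  have hmul : ConvexOn ℝ S (fun p => p * φ p) :=
    (convexOn_id hφ.1).mul hφ (fun x hx => hS₀ hx) hφ₀ (monotoneOn_id.monovaryOn hφ_mono)
  exact (hquad.sub_convexOn hmul).congr fun p _ => by simp only [Pi.sub_apply]; ring

lemma StrictConcaveOn.exists_deriv_eq_zero_forall_lt {f : ℝ → ℝ} {a b x : ℝ}
    (hf : StrictConcaveOn ℝ (Icc a b) f) (hcont : ContinuousOn f (Icc a b)) (hx : x ∈ Icc a b)
    (ha : f a < f x) (hb : f b < f x) :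
    ∃ c ∈ Ioo a b, deriv f c = 0 ∧ ∀ p ∈ Icc a b, p ≠ c → f p < f c := by
  obtain ⟨c, hc, hmax⟩ := isCompact_Icc.exists_isMaxOn ⟨x, hx⟩ hcont
  have hxc : f x ≤ f c := hmax hx
  have hca : c ≠ a := by rintro rfl; linarith
  have hcb : c ≠ b := by rintro rfl; linarith
  have hc' : c ∈ Ioo a b := ⟨lt_of_le_of_ne hc.1 hca.symm, lt_of_le_of_ne hc.2 hcb⟩
  refine ⟨c, hc', (hmax.isLocalMax (Icc_mem_nhds hc'.1 hc'.2)).deriv_eq_zero, fun p hp hpc => ?_⟩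
  refine lt_of_not_ge fun hcp => hpc (hf.eq_of_isMaxOn ?_ hmax hp hc)
  exact fun q hq => (hmax hq).trans hcp

theorem exists_deriv_eq_zero_forall_lt_of_monotoneOn_convexOn {f s : ℝ → ℝ} {R a : ℝ}
    (hf_mono : MonotoneOn f (Ico 0 R)) (hf_conv : ConvexOn ℝ (Ico 0 R) f)
    (hf₀ : ∀ x ∈ Ico 0 R, 0 ≤ f x) (hf_cont : ContinuousOn f (Icc 0 a)) (ha : a ∈ Ioo 0 R)
    (hs : ∀ p, s p = p * (f a + 1 - f (a * p) - p) / (1 + a * deriv f a)) :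
    ∃ c ∈ Ioo 0 1, deriv s c = 0 ∧ ∀ p ∈ Icc 0 1, p ≠ c → s p < s c := by
  obtain ⟨ha₀, haR⟩ := ha
  have hD : 0 < 1 + a * deriv f a := by
    have h := hf_mono.derivWithin_nonneg (x := a)
    rw [derivWithin_of_mem_nhds (Ico_mem_nhds ha₀ haR)] at h
    positivity
  have hmaps : MapsTo (a * ·) (Icc 0 1) (Icc 0 a) := fun p hp =>
    ⟨mul_nonneg ha₀.le hp.1, mul_le_of_le_one_right ha₀.le hp.2⟩
  have hmaps' : MapsTo (a * ·) (Icc 0 1) (Ico 0 R) := fun p hp =>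
    Icc_subset_Ico_right haR (hmaps hp)
  have hφ_conv : ConvexOn ℝ (Icc 0 1) fun p => f (a * p) :=
    (hf_conv.comp_linearMap (LinearMap.mulLeft ℝ a)).subset hmaps' (convex_Icc 0 1)
  have hφ_mono : MonotoneOn (fun p => f (a * p)) (Icc 0 1) :=
    hf_mono.comp (fun x _ y _ hxy => mul_le_mul_of_nonneg_left hxy ha₀.le) hmaps'
  have hs_conc : StrictConcaveOn ℝ (Icc 0 1) s :=
    ((strictConcaveOn_mul_sub_sub Icc_subset_Ici_self hφ_conv hφ_mono
      (fun p hp => hf₀ _ (hmaps' hp)) (f a + 1)).div_const hD).congr fun p _ => (hs p).symm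
  have hs_cont : ContinuousOn s (Icc 0 1) := by
    have hφ_cont : ContinuousOn (fun p => f (a * p)) (Icc 0 1) := hf_cont.comp (by fun_prop) hmaps
    exact ((continuousOn_id.mul ((continuousOn_const.sub hφ_cont).sub continuousOn_id)).div_const
      _).congr fun p _ => hs p
  have hs_half : 0 < s (1 / 2) := by
    have hφ_half : f (a * (1 / 2)) ≤ f a := by
      simpa using hφ_mono ⟨by norm_num, by norm_num⟩ ⟨zero_le_one, le_rfl⟩ (by norm_num)
    rw [hs]
    exact div_pos (by nlinarith) hD
  exact hs_conc.exists_deriv_eq_zero_forall_lt hs_cont (x := 1 / 2) ⟨by norm_num, by norm_num⟩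
    (by simpa [hs] using hs_half) (by simpa [hs] using hs_half)

theorem ihara_s_unique_global_max_general
    (n : ℕ) (T : Matrix (Fin n) (Fin n) ℝ)
    (hT : ∀ i j, 0 ≤ T i j)
    (R : ℝ)
    (hsum : ∀ x ∈ Set.Ico (0 : ℝ) R,
      Summable (fun k : ℕ => (T ^ (k + 1)).trace / (k + 1) * x ^ (k + 1)))
    (ζ : ℝ → ℝ)
    (hζ : ∀ x : ℝ, ζ x = Real.exp (∑' k : ℕ, (T ^ (k + 1)).trace / (k + 1) * x ^ (k + 1)))
    (a : ℝ) (ha : a ∈ Set.Ioo (0 : ℝ) R)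
    (s : ℝ → ℝ)
    (hs : ∀ p : ℝ, s p = p * (ζ a + 1 - ζ (a * p) - p) / (1 + a * deriv ζ a)) :
    ∃ c ∈ Set.Ioo (0 : ℝ) 1, deriv s c = 0 ∧
      ∀ p ∈ Set.Icc (0 : ℝ) 1, p ≠ c → s p < s c := by
  have hu : ∀ k : ℕ, 0 ≤ (T ^ (k + 1)).trace / (k + 1) := fun k =>
    div_nonneg (Finset.sum_nonneg fun i _ => Matrix.pow_apply_nonneg hT _ i i) (by positivity)
  obtain rfl : ζ = fun x => exp (∑' k : ℕ, (T ^ (k + 1)).trace / (k + 1) * x ^ (k + 1)) :=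
    funext hζ
  exact exists_deriv_eq_zero_forall_lt_of_monotoneOn_convexOn
    (exp_monotone.comp_monotoneOn (monotoneOn_tsum_mul_pow_succ hu Ico_subset_Ici_self hsum))
    (convexOn_tsum_mul_pow_succ hu (convex_Ico 0 R) Ico_subset_Ici_self hsum).exp
    (fun x _ => (exp_pos _).le)
    (continuous_exp.comp_continuousOn (continuousOn_tsum_mul_pow_succ hu (hsum a ⟨ha.1.le, ha.2⟩)))
    ha hs

/-- Theorem 1 of the paper: There exists c ∈ (0,1) which is the unique
global maximum of s on (0,1): s'(c) = 0 and s(p) < s(c) for every p ∈ [0,1], p ≠ c. -/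
theorem ihara_s_unique_global_max
    (n : ℕ) (hn : 0 < n) (T : Matrix (Fin n) (Fin n) ℝ)
    (hT : ∀ i j, 0 ≤ T i j) (htr : T.trace = 0)
    (R : ℝ) (hR : 0 < R)
    (hsum : ∀ x ∈ Set.Ico (0 : ℝ) R,
      Summable (fun k : ℕ => (T ^ (k + 1)).trace / (k + 1) * x ^ (k + 1)))
    (ζ : ℝ → ℝ)
    (hζ : ∀ x : ℝ, ζ x = Real.exp (∑' k : ℕ, (T ^ (k + 1)).trace / (k + 1) * x ^ (k + 1)))
    (a : ℝ) (ha : a ∈ Set.Ioo (0 : ℝ) R)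
    (s : ℝ → ℝ)
    (hs : ∀ p : ℝ, s p = p * (ζ a + 1 - ζ (a * p) - p) / (1 + a * deriv ζ a)) :
    ∃ c ∈ Set.Ioo (0 : ℝ) 1, deriv s c = 0 ∧
      ∀ p ∈ Set.Icc (0 : ℝ) 1, p ≠ c → s p < s c :=
  ihara_s_unique_global_max_general n T hT R hsum ζ hζ a ha s hs
end
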